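/- arXiv:1510.08624 — 3 statements merged into one kernel-verified Lean document; each statement's English description precedes it below -/
import Mathlib

section
/- Let β : [0,1]×[0,1] → ℝ be continuous and non-negative satisfying: for every α ∈ (0,1) there exists (s*,y*) ∈ [0,α]×[α,1] with β(s*,y*) > 0. Define R(x) = inf { s ∈ [0,1) : β(s,τ) > 0 for some τ ≥ x }. Then R is right-continuous on [0,1). -/
open Set

theorem stmt_1 (β : ℝ → ℝ → ℝ)
    (hcont : ContinuousOn (fun p : ℝ × ℝ => β p.1 p.2) (Icc 0 1 ×ˢ Icc 0 1))
    (hnn : ∀ s ∈ Icc (0:ℝ) 1, ∀ y ∈ Icc (0:ℝ) 1, 0 ≤ β s y)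
    (hirr : ∀ α ∈ Ioo (0:ℝ) 1, ∃ s ∈ Icc (0:ℝ) α, ∃ y ∈ Icc α 1, 0 < β s y)
    (R : ℝ → ℝ)
    (hR : ∀ x ∈ Ico (0:ℝ) 1,
      R x = sInf {s : ℝ | s ∈ Ico (0:ℝ) 1 ∧ ∃ τ ∈ Icc x 1, 0 < β s τ}) :
    ∀ x ∈ Ico (0:ℝ) 1, ∀ ε > (0:ℝ), ∃ δ > (0:ℝ),
      ∀ y, x ≤ y → y < x + δ → y < 1 → R y - R x < ε := by
  intro x hx ε hε
  set S : ℝ → Set ℝ := fun z => {s : ℝ | s ∈ Ico (0:ℝ) 1 ∧ ∃ τ ∈ Icc z 1, 0 < β s τ} with hS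
  have hSne : ∀ z ∈ Ico (0:ℝ) 1, (S z).Nonempty := by
    intro z hz
    obtain ⟨s, hs, y, hy, hb⟩ := hirr ((z + 1) / 2)
      ⟨by linarith [hz.1], by linarith [hz.2]⟩
    exact ⟨s, ⟨hs.1, by linarith [hs.2, hz.2]⟩, y, ⟨by linarith [hy.1, hz.2], hy.2⟩, hb⟩
  have hbdd : ∀ z, BddBelow (S z) := fun z => ⟨0, fun s hs => hs.1.1⟩
  have hRx := hR x hx
  have hlt : sInf (S x) < sInf (S x) + ε := by linarith
  obtain ⟨s0, hs0, hs0lt⟩ := exists_lt_of_csInf_lt (hSne x hx) hlt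
  obtain ⟨hs0mem, τ0, hτ0, hβ⟩ := hs0
  have key : ∃ x' ∈ Ioc x 1, 0 < β s0 x' := by
    rcases lt_or_eq_of_le hτ0.1 with h | h
    · exact ⟨τ0, ⟨h, hτ0.2⟩, hβ⟩
    · -- τ0 = x, use continuity
      have hβ' : 0 < β s0 x := h ▸ hβ
      have hcg : ContinuousOn (fun t => β s0 t) (Icc 0 1) := by
        have hmap : MapsTo (fun t : ℝ => (s0, t)) (Icc 0 1) (Icc 0 1 ×ˢ Icc 0 1) :=
          fun t ht => ⟨⟨hs0mem.1, hs0mem.2.le⟩, ht⟩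
        exact hcont.comp ((continuous_const.prodMk continuous_id).continuousOn) hmap
      have hxmem : x ∈ Icc (0:ℝ) 1 := ⟨hx.1, hx.2.le⟩
      have hev : ∀ᶠ t in nhdsWithin x (Icc 0 1), 0 < β s0 t :=
        (hcg x hxmem).eventually (eventually_gt_nhds hβ')
      have hsub : Ioc x 1 ⊆ Icc (0:ℝ) 1 := fun t ht => ⟨le_of_lt (lt_of_le_of_lt hx.1 ht.1), ht.2⟩
      have hev2 : ∀ᶠ t in nhdsWithin x (Ioc x 1), 0 < β s0 t :=
        hev.filter_mono (nhdsWithin_mono x hsub)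
      have hne : (nhdsWithin x (Ioc x 1)).NeBot := by
        rw [mem_closure_iff_nhdsWithin_neBot.symm, closure_Ioc (ne_of_lt hx.2)]
        exact ⟨le_refl x, hx.2.le⟩
      obtain ⟨t, ht⟩ := (hev2.and (eventually_mem_nhdsWithin)).exists
      exact ⟨t, ht.2, ht.1⟩
  obtain ⟨x', hx', hβ'⟩ := key
  refine ⟨x' - x, by linarith [hx'.1], fun y hxy hyδ hy1 => ?_⟩
  have hy : y ∈ Ico (0:ℝ) 1 := ⟨le_trans hx.1 hxy, hy1⟩
  have hRy := hR y hy
  have hmem : s0 ∈ S y := ⟨hs0mem, x', ⟨by linarith, hx'.2⟩, hβ'⟩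
  have hle : R y ≤ s0 := by rw [hRy]; exact csInf_le (hbdd y) hmem
  have : R x = sInf (S x) := hRx
  linarith
end

section
/- Let X be a Banach space, 𝓣₀ a C₀-semigroup on X with 𝓣₀(t) = 0 for t ≥ 1, and C ∈ L(X). Let 𝓛 : [0,∞) → L(X) be strongly continuous satisfying 𝓛(t) = 𝓛₀(t) + ∫_0^t 𝓛₀(t−s)𝓛(s) ds where 𝓛₀(t) = C 𝓣₀(t), and define 𝓣(t) = 𝓣₀(t) + ∫_0^t 𝓣₀(t−s)𝓛(s) ds. Then for t ≥ 1, 𝓣(t) = ∫_{t−1}^t 𝓣₀(t−s)𝓛(s) ds, and hence for every ψ ∈ X, 𝓣(t)ψ = K φ where φ ∈ L¹([−1,0]; X) is given by φ(θ) = 𝓛(t+θ)ψ and K φ := ∫_{−1}^0 𝓣₀(−s) φ(s) ds. In particular the range of 𝓣(t) is contained in the range of K for t ≥ 1. -/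
open Set intervalIntegral MeasureTheory

theorem stmt_9 (X : Type*) [NormedAddCommGroup X] [NormedSpace ℝ X] [CompleteSpace X]
    (T0 : ℝ → X →L[ℝ] X)
    (hT0id : T0 0 = ContinuousLinearMap.id ℝ X)
    (hT0sg : ∀ t u : ℝ, 0 ≤ t → 0 ≤ u → T0 (t + u) = (T0 t).comp (T0 u))
    (hT0cont : ∀ x : X, ContinuousOn (fun t => T0 t x) (Ici 0))
    (hnil : ∀ t : ℝ, 1 ≤ t → T0 t = 0)
    (C : X →L[ℝ] X)
    (L : ℝ → X →L[ℝ] X)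
    (hLcont : ∀ x : X, ContinuousOn (fun t => L t x) (Ici 0))
    (hL : ∀ t : ℝ, 0 ≤ t → ∀ x : X,
      L t x = C (T0 t x) + ∫ s in (0:ℝ)..t, C (T0 (t - s) (L s x)))
    (T : ℝ → X →L[ℝ] X)
    (hT : ∀ t : ℝ, 0 ≤ t → ∀ x : X,
      T t x = T0 t x + ∫ s in (0:ℝ)..t, T0 (t - s) (L s x))
    (K : (ℝ → X) → X)
    (hK : ∀ φ : ℝ → X, K φ = ∫ s in (-1:ℝ)..0, T0 (-s) (φ s)) :
    ∀ t : ℝ, 1 ≤ t →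
      (∀ ψ : X, T t ψ = ∫ s in (t - 1)..t, T0 (t - s) (L s ψ)) ∧
      (∀ ψ : X, T t ψ = K (fun θ => L (t + θ) ψ)) ∧
      (∀ ψ : X, ∃ φ : ℝ → X, T t ψ = K φ) := by
  intro t ht
  have ht0 : (0 : ℝ) ≤ t := le_trans zero_le_one ht
  have ht1 : (0 : ℝ) ≤ t - 1 := by linarith
  -- uniform bound on ‖T0 τ‖ for τ ∈ [0, t]
  obtain ⟨M, hM⟩ : ∃ M, ∀ τ : Icc (0 : ℝ) t, ‖T0 (τ : ℝ)‖ ≤ M := by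
    apply banach_steinhaus
    intro x
    have hc : ContinuousOn (fun τ => T0 τ x) (Icc (0 : ℝ) t) :=
      (hT0cont x).mono Icc_subset_Ici_self
    obtain ⟨B, hB⟩ := IsCompact.exists_bound_of_continuousOn isCompact_Icc hc
    exact ⟨B, fun τ => hB τ τ.2⟩
  have key : ∀ ψ : X, T t ψ = ∫ s in (t - 1)..t, T0 (t - s) (L s ψ) := by
    intro ψ
    set f : ℝ → X := fun s => T0 (t - s) (L s ψ) with hfdef
    have hf0 : EqOn f (fun _ => (0 : X)) (uIcc (0 : ℝ) (t - 1)) := by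
      intro s hs
      rw [uIcc_of_le ht1] at hs
      have : (1 : ℝ) ≤ t - s := by
        have := hs.2
        linarith
      simp [hfdef, hnil _ this]
    have hi1 : IntervalIntegrable f volume 0 (t - 1) := by
      have : ContinuousOn f (uIcc (0 : ℝ) (t - 1)) :=
        (continuousOn_const (c := (0 : X))).congr hf0
      exact this.intervalIntegrable
    have hcont2 : ContinuousOn f (uIcc (t - 1) t) := by
      rw [uIcc_of_le (by linarith : t - 1 ≤ t)]
      intro s₀ hs₀
      have hsub : Icc (t - 1) t ⊆ Ici (0 : ℝ) := fun s hs => le_trans ht1 hs.1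
      have h1 : ContinuousWithinAt (fun s => L s ψ) (Icc (t - 1) t) s₀ :=
        ((hLcont ψ).mono hsub) s₀ hs₀
      have hts₀ : t - s₀ ∈ Ici (0 : ℝ) := by
        simp only [mem_Ici, sub_nonneg]
        exact hs₀.2
      have h2 : ContinuousWithinAt (fun s => T0 (t - s) (L s₀ ψ)) (Icc (t - 1) t) s₀ := by
        have hinner : ContinuousWithinAt (fun s : ℝ => t - s) (Icc (t - 1) t) s₀ :=
          (continuous_const.sub continuous_id).continuousWithinAt
        have hmaps : MapsTo (fun s : ℝ => t - s) (Icc (t - 1) t) (Ici (0 : ℝ)) := by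
          intro s hs
          simp only [mem_Ici, sub_nonneg]
          exact hs.2
        exact ((hT0cont (L s₀ ψ)) (t - s₀) hts₀).comp hinner hmaps
      -- now combine via squeeze
      have hnorm : Filter.Tendsto (fun s => ‖f s - f s₀‖) (nhdsWithin s₀ (Icc (t - 1) t))
          (nhds 0) := by
        have hg : Filter.Tendsto
            (fun s => M * ‖L s ψ - L s₀ ψ‖ + ‖T0 (t - s) (L s₀ ψ) - T0 (t - s₀) (L s₀ ψ)‖)
            (nhdsWithin s₀ (Icc (t - 1) t)) (nhds 0) := by
          have hA : Filter.Tendsto (fun s => M * ‖L s ψ - L s₀ ψ‖)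
              (nhdsWithin s₀ (Icc (t - 1) t)) (nhds (M * 0)) := by
            apply Filter.Tendsto.const_mul
            have h1' : Filter.Tendsto (fun s => L s ψ - L s₀ ψ)
                (nhdsWithin s₀ (Icc (t - 1) t)) (nhds (L s₀ ψ - L s₀ ψ)) :=
              Filter.Tendsto.sub h1 tendsto_const_nhds
            rw [sub_self] at h1'
            simpa using h1'.norm
          have hB : Filter.Tendsto (fun s => ‖T0 (t - s) (L s₀ ψ) - T0 (t - s₀) (L s₀ ψ)‖)
              (nhdsWithin s₀ (Icc (t - 1) t)) (nhds 0) := by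
            have h2' : Filter.Tendsto (fun s => T0 (t - s) (L s₀ ψ) - T0 (t - s₀) (L s₀ ψ))
                (nhdsWithin s₀ (Icc (t - 1) t))
                (nhds (T0 (t - s₀) (L s₀ ψ) - T0 (t - s₀) (L s₀ ψ))) :=
              Filter.Tendsto.sub h2 tendsto_const_nhds
            rw [sub_self] at h2'
            simpa using h2'.norm
          simpa using hA.add hB
        apply squeeze_zero'
        · exact Filter.Eventually.of_forall fun s => norm_nonneg _
        · filter_upwards [self_mem_nhdsWithin] with s hs
          have hbound : ‖f s - f s₀‖ ≤
              M * ‖L s ψ - L s₀ ψ‖ + ‖T0 (t - s) (L s₀ ψ) - T0 (t - s₀) (L s₀ ψ)‖ := by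
            have hsplit : f s - f s₀ =
                T0 (t - s) (L s ψ - L s₀ ψ) +
                  (T0 (t - s) (L s₀ ψ) - T0 (t - s₀) (L s₀ ψ)) := by
              simp only [hfdef, map_sub]
              abel
            rw [hsplit]
            refine le_trans (norm_add_le _ _) (add_le_add ?_ le_rfl)
            have hmem : t - s ∈ Icc (0 : ℝ) t := by
              constructor
              · linarith [hs.2]
              · linarith [hs.1, ht]
            calc ‖T0 (t - s) (L s ψ - L s₀ ψ)‖
                ≤ ‖T0 (t - s)‖ * ‖L s ψ - L s₀ ψ‖ := (T0 (t - s)).le_opNorm _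
              _ ≤ M * ‖L s ψ - L s₀ ψ‖ :=
                  mul_le_mul_of_nonneg_right (hM ⟨t - s, hmem⟩) (norm_nonneg _)
          exact hbound
        · exact hg
      rw [ContinuousWithinAt, tendsto_iff_norm_sub_tendsto_zero]
      exact hnorm
    have hi2 : IntervalIntegrable f volume (t - 1) t := hcont2.intervalIntegrable
    have hsplit := intervalIntegral.integral_add_adjacent_intervals hi1 hi2
    have hzero : (∫ s in (0 : ℝ)..(t - 1), f s) = 0 := by
      rw [intervalIntegral.integral_congr hf0]
      simp
    rw [hT t ht0 ψ, hnil t ht, ← hsplit, hzero]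
    simp
  refine ⟨key, ?_, ?_⟩
  · intro ψ
    rw [key ψ, hK]
    have hfun : (fun s : ℝ => T0 (-s) (L (t + s) ψ)) =
        fun s : ℝ => T0 (t - (s + t)) (L (s + t) ψ) := by
      funext s
      rw [show t - (s + t) = -s by ring, add_comm t s]
    show (∫ s in (t - 1)..t, T0 (t - s) (L s ψ)) = ∫ s in (-1 : ℝ)..0, T0 (-s) (L (t + s) ψ)
    rw [hfun]
    rw [intervalIntegral.integral_comp_add_right (a := (-1 : ℝ)) (b := 0) (d := t)
      (f := fun s => T0 (t - s) (L s ψ))]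
    ring_nf
  · intro ψ
    exact ⟨fun θ => L (t + θ) ψ, by
      rw [key ψ, hK]
      show (∫ s in (t - 1)..t, T0 (t - s) (L s ψ)) = ∫ s in (-1 : ℝ)..0, T0 (-s) (L (t + s) ψ)
      have hfun : (fun s : ℝ => T0 (-s) (L (t + s) ψ)) =
          fun s : ℝ => T0 (t - (s + t)) (L (s + t) ψ) := by
        funext s
        rw [show t - (s + t) = -s by ring, add_comm t s]
      rw [hfun]
      rw [intervalIntegral.integral_comp_add_right (a := (-1 : ℝ)) (b := 0) (d := t)
        (f := fun s => T0 (t - s) (L s ψ))]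
      ring_nf⟩
end

section
/- (Abstract Lemma: b(t;φ) = C 𝓣(t) Kφ.) Let X be a Banach space, 𝓣₀ a C₀-semigroup with 𝓣₀(t) = 0 for t ≥ 1, C ∈ L(X), 𝓛₀(t) = C 𝓣₀(t), 𝓛 the solution of 𝓛(t) = 𝓛₀(t) + ∫_0^t 𝓛(a)𝓛₀(t−a) da, and 𝓣(t) = 𝓣₀(t) + ∫_0^t 𝓣₀(t−s)𝓛(s) ds. For φ ∈ L¹([−1,0];X) define f(t) = ∫_t^1 𝓛₀(a)φ(t−a) da (zero for t ≥ 1) and b(t;φ) = f(t) + ∫_0^t 𝓛(a) f(t−a) da. Then f(t) = 𝓛₀(t)(Kφ) where Kφ = ∫_0^1 𝓣₀(a)φ(−a) da, and consequently b(t;φ) = 𝓛(t)(Kφ) = C 𝓣(t)(Kφ) for t > 0. -/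
/-!
By the semigroup law, `C 𝓣₀(t) Kφ = ∫₀¹ C 𝓣₀(t + a) φ(-a) da`; nilpotency cuts this integral off
at `t + a = 1`, and the substitution `a ↦ t + a` turns it into `f t`. Then `b(t) = 𝓛(t) Kφ` is the
renewal equation itself.

The identity `𝓛(t) = C 𝓣(t)` says that `𝓛` also solves the transposed renewal equation
`𝓛 = 𝓛₀ + 𝓛₀ ⋆ 𝓛`. Associativity of convolution (Fubini on a simplex) shows that the defect
`D = 𝓛 - 𝓛₀ - 𝓛₀ ⋆ 𝓛` solves the homogeneous Volterra equation `D = D ⋆ 𝓛₀`, and iterating it gives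
`‖D(t)‖ ≤ M (K t)ⁿ / n!`, so `D = 0`. The operator families are only strongly continuous;
Banach–Steinhaus makes `(t, x) ↦ A(t) x` jointly continuous, which is what the integrals need.
-/

open Set Filter Topology MeasureTheory intervalIntegral Function

section StronglyContinuous

variable {X Y : Type*} [NormedAddCommGroup X] [NormedSpace ℝ X]
  [NormedAddCommGroup Y] [NormedSpace ℝ Y]

theorem IsCompact.exists_bound_of_continuousOn_apply [CompleteSpace X] {α : Type*}
    [TopologicalSpace α] {A : α → X →L[ℝ] Y} {S : Set α} (hS : IsCompact S)
    (hA : ∀ x, ContinuousOn (fun t => A t x) S) : ∃ M, ∀ t ∈ S, ‖A t‖ ≤ M := by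
  have hbdd : ∀ x, ∃ C, ∀ t : S, ‖A t x‖ ≤ C := fun x => by
    obtain ⟨C, hC⟩ := hS.exists_bound_of_continuousOn (hA x)
    exact ⟨C, fun t => hC t t.2⟩
  obtain ⟨M, hM⟩ := banach_steinhaus (g := fun t : S => A t) hbdd
  exact ⟨M, fun t ht => hM ⟨t, ht⟩⟩

theorem continuous_uncurry_of_continuous_apply [CompleteSpace X] {α : Type*}
    [TopologicalSpace α] [WeaklyLocallyCompactSpace α] {A : α → X →L[ℝ] Y}
    (hA : ∀ x, Continuous fun t => A t x) : Continuous fun p : α × X => A p.1 p.2 := by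
  refine continuous_iff_continuousAt.2 fun ⟨t₀, x₀⟩ => ?_
  obtain ⟨K, hK, hKt₀⟩ := exists_compact_mem_nhds t₀
  obtain ⟨M, hM⟩ := hK.exists_bound_of_continuousOn_apply fun x => (hA x).continuousOn
  have hsmall : Tendsto (fun p : α × X => A p.1 (p.2 - x₀)) (𝓝 (t₀, x₀)) (𝓝 0) := by
    refine squeeze_zero_norm' (a := fun p => M * ‖p.2 - x₀‖) ?_ ?_
    · filter_upwards [prod_mem_nhds hKt₀ univ_mem] with p hp
      exact (A p.1).le_of_opNorm_le (hM _ hp.1) _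
    · simpa using ((continuous_snd.sub (continuous_const (y := x₀))).norm.const_mul M).tendsto
        (t₀, x₀)
  have hfixed : Tendsto (fun p : α × X => A p.1 x₀) (𝓝 (t₀, x₀)) (𝓝 (A t₀ x₀)) :=
    ((hA x₀).comp continuous_fst).tendsto _
  simpa [ContinuousAt] using hsmall.add hfixed

theorem continuous_clm_apply_of_continuous_apply [CompleteSpace X] {α β : Type*}
    [TopologicalSpace α] [WeaklyLocallyCompactSpace α] [TopologicalSpace β]
    {A : α → X →L[ℝ] Y} (hA : ∀ x, Continuous fun t => A t x) {f : β → α} {g : β → X}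
    (hf : Continuous f) (hg : Continuous g) : Continuous fun b => A (f b) (g b) :=
  (continuous_uncurry_of_continuous_apply hA).comp (hf.prodMk hg)

theorem IntervalIntegrable.clm_apply_of_continuousOn [CompleteSpace X] {A : ℝ → X →L[ℝ] Y}
    {ψ : ℝ → X} {a b : ℝ} {μ : Measure ℝ} (hA : ∀ x, ContinuousOn (fun t => A t x) (uIcc a b))
    (hψ : IntervalIntegrable ψ μ a b) : IntervalIntegrable (fun t => A t (ψ t)) μ a b := by
  -- clamping to `uIcc a b` makes the family strongly continuous on all of `ℝ`
  let p : ℝ → ℝ := fun t => projIcc (a ⊓ b) (a ⊔ b) inf_le_sup t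
  have hpA : ∀ x, Continuous fun t => A (p t) x := fun x =>
    (hA x).comp_continuous (continuous_subtype_val.comp continuous_projIcc) fun t =>
      (projIcc _ _ _ t).2
  obtain ⟨M, hM⟩ := isCompact_uIcc.exists_bound_of_continuousOn_apply hA
  rw [intervalIntegrable_iff] at hψ ⊢
  refine Integrable.mono' (hψ.norm.const_mul M) ?_ ?_
  · refine ((continuous_uncurry_of_continuous_apply hpA).comp_aestronglyMeasurable
      (aestronglyMeasurable_id.prodMk hψ.aestronglyMeasurable)).congr ?_
    filter_upwards [ae_restrict_mem measurableSet_uIoc] with t ht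
    simp [p, projIcc_of_mem _ (uIoc_subset_uIcc ht)]
  · filter_upwards [ae_restrict_mem measurableSet_uIoc] with t ht
    exact (A t).le_of_opNorm_le (hM t (uIoc_subset_uIcc ht)) _

theorem intervalIntegrable_apply_neg [CompleteSpace X] {A : ℝ → X →L[ℝ] Y} {φ : ℝ → X} {c : ℝ}
    (hA : ∀ x, ContinuousOn (fun t => A t x) (Ici 0)) (hc : 0 ≤ c)
    (hφ : IntegrableOn φ (Icc (-c) 0)) : IntervalIntegrable (fun a => A a (φ (-a))) volume 0 c := by
  have hφ' := (intervalIntegrable_iff_integrableOn_Icc_of_le (neg_nonpos.2 hc)).2 hφ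
  refine IntervalIntegrable.clm_apply_of_continuousOn (fun x => (hA x).mono fun a ha => ?_) ?_
  · rw [uIcc_of_le hc] at ha
    exact ha.1
  · simpa using ((IntervalIntegrable.iff_comp_neg (by finiteness)).1 hφ').symm

theorem intervalIntegrable_apply_sub [CompleteSpace X] {A : ℝ → X →L[ℝ] Y} {ψ : ℝ → X} {t : ℝ}
    (hA : ∀ x, ContinuousOn (fun t => A t x) (Ici 0)) (hψ : ContinuousOn ψ (Ici 0)) (ht : 0 ≤ t) :
    IntervalIntegrable (fun s => A (t - s) (ψ s)) volume 0 t := by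
  have hIcc : uIcc 0 t = Icc 0 t := uIcc_of_le ht
  refine IntervalIntegrable.clm_apply_of_continuousOn
    (fun x => (hA x).comp (continuousOn_const.sub continuousOn_id) fun s hs => ?_)
    (hψ.mono fun s hs => ?_).intervalIntegrable
  · exact sub_nonneg.2 (hIcc ▸ hs).2
  · exact (hIcc ▸ hs).1

theorem continuous_apply_max_zero {A : ℝ → X →L[ℝ] Y}
    (hA : ∀ x, ContinuousOn (fun t => A t x) (Ici 0)) (x : X) :
    Continuous fun t => A (max 0 t) x :=
  (hA x).comp_continuous (continuous_const.max continuous_id) fun t => le_max_left 0 t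

end StronglyContinuous

section Volterra

variable {X Y : Type*} [SeminormedAddCommGroup X] [NormedAddCommGroup Y] [NormedSpace ℝ Y]
  {E : ℝ → X → Y} {P : ℝ → X → X} {t M K : ℝ}

theorem norm_le_pow_div_factorial_of_homogeneous_volterra (hM : 0 ≤ M) (hK : 0 ≤ K)
    (hE : ∀ r ∈ Icc 0 t, ∀ y, ‖E r y‖ ≤ M * ‖y‖) (hP : ∀ r ∈ Icc 0 t, ∀ y, ‖P r y‖ ≤ K * ‖y‖)
    (hrec : ∀ r ∈ Icc 0 t, ∀ y, E r y = ∫ s in 0..r, E s (P (r - s) y)) (n : ℕ) :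
    ∀ r ∈ Icc 0 t, ∀ y, ‖E r y‖ ≤ M * ‖y‖ * ((K * r) ^ n / n.factorial) := by
  induction n with
  | zero => simpa using hE
  | succ n ih =>
    intro r hr y
    have hle : ∀ s ∈ Ioc 0 r,
        ‖E s (P (r - s) y)‖ ≤ M * ‖y‖ * K ^ (n + 1) / n.factorial * s ^ n := by
      intro s hs
      have hrs : r - s ∈ Icc 0 t := ⟨by linarith [hs.2], by linarith [hs.1, hr.2]⟩
      calc ‖E s (P (r - s) y)‖ ≤ M * ‖P (r - s) y‖ * ((K * s) ^ n / n.factorial) :=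
            ih s ⟨hs.1.le, hs.2.trans hr.2⟩ _
        _ ≤ M * (K * ‖y‖) * ((K * s) ^ n / n.factorial) := by
            gcongr
            exacts [div_nonneg (pow_nonneg (mul_nonneg hK hs.1.le) n) n.factorial.cast_nonneg,
              hP _ hrs y]
        _ = M * ‖y‖ * K ^ (n + 1) / n.factorial * s ^ n := by ring
    calc ‖E r y‖ = ‖∫ s in 0..r, E s (P (r - s) y)‖ := by rw [hrec r hr y]
      _ ≤ ∫ s in 0..r, M * ‖y‖ * K ^ (n + 1) / n.factorial * s ^ n :=
        norm_integral_le_of_norm_le hr.1 (ae_of_all _ hle)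
          (((continuous_pow n).const_mul _).intervalIntegrable _ _)
      _ = M * ‖y‖ * ((K * r) ^ (n + 1) / (n + 1).factorial) := by
        rw [intervalIntegral.integral_const_mul, integral_pow, Nat.factorial_succ]
        push_cast
        field_simp
        ring

theorem eq_zero_of_homogeneous_volterra (hM : 0 ≤ M) (hK : 0 ≤ K)
    (hE : ∀ r ∈ Icc 0 t, ∀ y, ‖E r y‖ ≤ M * ‖y‖) (hP : ∀ r ∈ Icc 0 t, ∀ y, ‖P r y‖ ≤ K * ‖y‖)
    (hrec : ∀ r ∈ Icc 0 t, ∀ y, E r y = ∫ s in 0..r, E s (P (r - s) y)) :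
    ∀ r ∈ Icc 0 t, ∀ y, E r y = 0 := by
  intro r hr y
  have hlim : Tendsto (fun n : ℕ => M * ‖y‖ * ((K * r) ^ n / n.factorial)) atTop (𝓝 0) := by
    simpa using (FloorSemiring.tendsto_pow_div_factorial_atTop (K * r)).const_mul (M * ‖y‖)
  exact norm_le_zero_iff.1 (ge_of_tendsto' hlim fun n =>
    norm_le_pow_div_factorial_of_homogeneous_volterra hM hK hE hP hrec n r hr y)

end Volterra

section Triangle

variable {E : Type*} [NormedAddCommGroup E] [NormedSpace ℝ E]

theorem intervalIntegral.integral_indicator_Ici {f : ℝ → E} {a b c : ℝ} (h : c ∈ Icc a b) :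
    ∫ x in a..b, (Ici c).indicator f x = ∫ x in c..b, f x := by
  have hneg : (fun x => (Ici c).indicator f (-x)) = {x | x ≤ -c}.indicator fun x => f (-x) := by
    ext x
    simp [indicator_apply, le_neg]
  calc ∫ x in a..b, (Ici c).indicator f x = ∫ x in -b..-a, (Ici c).indicator f (-x) := by
        rw [integral_comp_neg, neg_neg, neg_neg]
    _ = ∫ x in -b..-c, f (-x) := by
        rw [hneg, integral_indicator ⟨neg_le_neg h.2, neg_le_neg h.1⟩]
    _ = ∫ x in c..b, f x := by rw [integral_comp_neg, neg_neg, neg_neg]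

theorem integral_integral_triangle_swap {g : ℝ → ℝ → E} (hg : Continuous (uncurry g)) {a b : ℝ}
    (hab : a ≤ b) : ∫ s in a..b, ∫ u in a..s, g u s = ∫ u in a..b, ∫ s in u..b, g u s := by
  let G : ℝ → ℝ → E := fun u s => if u ≤ s then g u s else 0
  have hrow : ∀ s ∈ uIcc a b, ∫ u in a..b, G u s = ∫ u in a..s, g u s := by
    intro s hs
    rw [uIcc_of_le hab] at hs
    rw [← integral_indicator hs]
    rfl
  have hcol : ∀ u ∈ uIcc a b, ∫ s in a..b, G u s = ∫ s in u..b, g u s := by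
    intro u hu
    rw [uIcc_of_le hab] at hu
    rw [← integral_indicator_Ici hu]
    rfl
  have hint : IntegrableOn (uncurry G) (uIoc a b ×ˢ uIoc a b) := by
    have hsq : IntegrableOn (uncurry g) (uIoc a b ×ˢ uIoc a b) :=
      (hg.continuousOn.integrableOn_compact (isCompact_uIcc.prod isCompact_uIcc)).mono_set
        (prod_mono uIoc_subset_uIcc uIoc_subset_uIcc)
    exact hsq.indicator (measurableSet_le measurable_fst measurable_snd)
  calc ∫ s in a..b, ∫ u in a..s, g u s = ∫ s in a..b, ∫ u in a..b, G u s :=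
        integral_congr fun s hs => (hrow s hs).symm
    _ = ∫ u in a..b, ∫ s in a..b, G u s := (intervalIntegral_intervalIntegral_swap hint).symm
    _ = ∫ u in a..b, ∫ s in u..b, g u s := integral_congr hcol

/-- Both sides integrate `F p q w` over the simplex `p + q + w = r`, `p, q, w ≥ 0`. -/
theorem integral_integral_simplex_rotate {F : ℝ → ℝ → ℝ → E}
    (hF : Continuous fun p : ℝ × ℝ × ℝ => F p.1 p.2.1 p.2.2) {r : ℝ} (hr : 0 ≤ r) :
    ∫ a in 0..r, ∫ u in 0..a, F (r - a) u (a - u) =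
      ∫ s in 0..r, ∫ u in 0..s, F (s - u) u (r - s) := by
  have hg₁ : Continuous (uncurry fun u a => F (r - a) u (a - u)) :=
    hF.comp (by fun_prop : Continuous fun p : ℝ × ℝ => (r - p.2, p.1, p.2 - p.1))
  have hg₂ : Continuous (uncurry fun u s => F (s - u) u (r - s)) :=
    hF.comp (by fun_prop : Continuous fun p : ℝ × ℝ => (p.2 - p.1, p.1, r - p.2))
  rw [integral_integral_triangle_swap hg₁ hr, integral_integral_triangle_swap hg₂ hr]
  refine integral_congr fun u _ => ?_
  calc ∫ a in u..r, F (r - a) u (a - u)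
      = ∫ a in u..r, (fun s => F (s - u) u (r - s)) (r + u - a) := by
        congr 1
        ext a
        dsimp only
        rw [show r + u - a - u = r - a by ring, show r - (r + u - a) = a - u by ring]
    _ = ∫ s in u..r, F (s - u) u (r - s) := by
        rw [integral_comp_sub_left (fun s => F (s - u) u (r - s)), add_sub_cancel_left,
          add_sub_cancel_right]

end Triangle

section Resolvent

variable {X : Type*} [NormedAddCommGroup X] [NormedSpace ℝ X]

noncomputable def resolventDefect (P L : ℝ → X →L[ℝ] X) (t : ℝ) (x : X) : X :=
  L t x - P t x - ∫ s in 0..t, P (t - s) (L s x)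

variable {P L : ℝ → X →L[ℝ] X}

theorem norm_resolventDefect_le {MP ML t : ℝ} (hMP : ∀ s ∈ Icc 0 t, ‖P s‖ ≤ MP)
    (hML : ∀ s ∈ Icc 0 t, ‖L s‖ ≤ ML) {r : ℝ} (hr : r ∈ Icc 0 t) (y : X) :
    ‖resolventDefect P L r y‖ ≤ (ML + MP + t * (MP * ML)) * ‖y‖ := by
  have hMP0 : 0 ≤ MP := (norm_nonneg _).trans (hMP 0 ⟨le_rfl, hr.1.trans hr.2⟩)
  have hML0 : 0 ≤ ML := (norm_nonneg _).trans (hML 0 ⟨le_rfl, hr.1.trans hr.2⟩)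
  have hLy : ∀ s ∈ Icc 0 t, ‖L s y‖ ≤ ML * ‖y‖ := fun s hs => (L s).le_of_opNorm_le (hML s hs) y
  have hint : ‖∫ s in 0..r, P (r - s) (L s y)‖ ≤ MP * ML * ‖y‖ * |r - 0| := by
    refine norm_integral_le_of_norm_le_const fun s hs => ?_
    rw [uIoc_of_le hr.1] at hs
    calc ‖P (r - s) (L s y)‖ ≤ MP * ‖L s y‖ :=
          (P (r - s)).le_of_opNorm_le (hMP _ ⟨by linarith [hs.2], by linarith [hs.1, hr.2]⟩) _
      _ ≤ MP * (ML * ‖y‖) := by gcongr; exact hLy s ⟨hs.1.le, hs.2.trans hr.2⟩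
      _ = MP * ML * ‖y‖ := by ring
  rw [sub_zero, abs_of_nonneg hr.1] at hint
  have hr' : MP * ML * ‖y‖ * r ≤ t * (MP * ML) * ‖y‖ := by
    nlinarith [hr.2, mul_nonneg (mul_nonneg hMP0 hML0) (norm_nonneg y)]
  calc ‖resolventDefect P L r y‖
      ≤ ‖L r y‖ + ‖P r y‖ + ‖∫ s in 0..r, P (r - s) (L s y)‖ :=
        (norm_sub_le _ _).trans (add_le_add_left (norm_sub_le _ _) _)
    _ ≤ ML * ‖y‖ + MP * ‖y‖ + t * (MP * ML) * ‖y‖ := by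
        gcongr
        exacts [hLy r hr, (P r).le_of_opNorm_le (hMP r hr) y, hint.trans hr']
    _ = (ML + MP + t * (MP * ML)) * ‖y‖ := by ring

variable [CompleteSpace X]

theorem integral_kernel_resolvent (hP : ∀ x, Continuous fun t => P t x)
    (hL : ∀ x, Continuous fun t => L t x)
    (hres : ∀ t, 0 ≤ t → ∀ x, L t x = P t x + ∫ a in 0..t, L a (P (t - a) x))
    {r : ℝ} (hr : 0 ≤ r) (y : X) :
    ∫ a in 0..r, P (r - a) (L a y) = (∫ s in 0..r, P s (P (r - s) y)) +
      ∫ s in 0..r, ∫ u in 0..s, P (s - u) (L u (P (r - s) y)) := by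
  have hPLP : Continuous fun p : ℝ × ℝ × ℝ => P p.1 (L p.2.1 (P p.2.2 y)) :=
    continuous_clm_apply_of_continuous_apply hP continuous_fst
      (continuous_clm_apply_of_continuous_apply hL (by fun_prop) ((hP y).comp (by fun_prop)))
  have hPP : Continuous fun a => P (r - a) (P a y) :=
    continuous_clm_apply_of_continuous_apply hP (by fun_prop) (hP y)
  have hinner : Continuous fun a => ∫ u in 0..a, P (r - a) (L u (P (a - u) y)) :=
    continuous_parametric_intervalIntegral_of_continuous
      (f := fun a u => P (r - a) (L u (P (a - u) y)))
      (hPLP.comp (by fun_prop : Continuous fun p : ℝ × ℝ => (r - p.1, p.2, p.1 - p.2)))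
      continuous_id
  have hswap : ∫ a in 0..r, P (r - a) (P a y) = ∫ s in 0..r, P s (P (r - s) y) := by
    simpa using integral_comp_sub_left (fun s => P s (P (r - s) y)) r (a := 0) (b := r)
  have hrotate := integral_integral_simplex_rotate (F := fun p q w => P p (L q (P w y))) hPLP hr
  rw [← hswap, ← hrotate, ← integral_add (hPP.intervalIntegrable _ _)
    (hinner.intervalIntegrable _ _)]
  refine integral_congr fun a ha => ?_
  have ha : 0 ≤ a := by rw [uIcc_of_le hr] at ha; exact ha.1
  have hint : IntervalIntegrable (fun u => L u (P (a - u) y)) volume 0 a :=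
    (continuous_clm_apply_of_continuous_apply hL continuous_id
      ((hP y).comp (by fun_prop))).intervalIntegrable _ _
  simp only [hres a ha y, map_add, (P (r - a)).intervalIntegral_comp_comm hint]

theorem resolventDefect_eq_integral (hP : ∀ x, Continuous fun t => P t x)
    (hL : ∀ x, Continuous fun t => L t x)
    (hres : ∀ t, 0 ≤ t → ∀ x, L t x = P t x + ∫ a in 0..t, L a (P (t - a) x))
    {r : ℝ} (hr : 0 ≤ r) (y : X) :
    resolventDefect P L r y = ∫ s in 0..r, resolventDefect P L s (P (r - s) y) := by
  have hLP : IntervalIntegrable (fun s => L s (P (r - s) y)) volume 0 r :=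
    (continuous_clm_apply_of_continuous_apply hL continuous_id
      ((hP y).comp (by fun_prop))).intervalIntegrable _ _
  have hPP : IntervalIntegrable (fun s => P s (P (r - s) y)) volume 0 r :=
    (continuous_clm_apply_of_continuous_apply hP continuous_id
      ((hP y).comp (by fun_prop))).intervalIntegrable _ _
  have hinner :
      IntervalIntegrable (fun s => ∫ u in 0..s, P (s - u) (L u (P (r - s) y))) volume 0 r :=
    (continuous_parametric_intervalIntegral_of_continuous
      (f := fun s u => P (s - u) (L u (P (r - s) y)))
      (continuous_clm_apply_of_continuous_apply hP (by fun_prop)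
        (continuous_clm_apply_of_continuous_apply hL continuous_snd ((hP y).comp (by fun_prop))))
      continuous_id).intervalIntegrable _ _
  simp only [resolventDefect]
  rw [integral_sub (hLP.sub hPP) hinner, integral_sub hLP hPP,
    integral_kernel_resolvent hP hL hres hr, hres r hr y]
  abel

theorem resolvent_comm_of_continuous (hP : ∀ x, Continuous fun t => P t x)
    (hL : ∀ x, Continuous fun t => L t x)
    (hres : ∀ t, 0 ≤ t → ∀ x, L t x = P t x + ∫ a in 0..t, L a (P (t - a) x))
    {t : ℝ} (ht : 0 ≤ t) (x : X) : L t x = P t x + ∫ s in 0..t, P (t - s) (L s x) := by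
  obtain ⟨MP, hMP⟩ := isCompact_Icc.exists_bound_of_continuousOn_apply (S := Icc 0 t)
    fun x => (hP x).continuousOn
  obtain ⟨ML, hML⟩ := isCompact_Icc.exists_bound_of_continuousOn_apply (S := Icc 0 t)
    fun x => (hL x).continuousOn
  have hMP0 : 0 ≤ MP := (norm_nonneg _).trans (hMP 0 ⟨le_rfl, ht⟩)
  have hML0 : 0 ≤ ML := (norm_nonneg _).trans (hML 0 ⟨le_rfl, ht⟩)
  have hzero := eq_zero_of_homogeneous_volterra (P := fun r y => P r y) (by positivity) hMP0
    (fun r hr y => norm_resolventDefect_le hMP hML hr y)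
    (fun r hr y => (P r).le_of_opNorm_le (hMP r hr) y)
    (fun r hr y => resolventDefect_eq_integral hP hL hres hr.1 y) t ⟨ht, le_rfl⟩ x
  rwa [resolventDefect, sub_sub, sub_eq_zero] at hzero

theorem resolvent_comm (hP : ∀ x, ContinuousOn (fun t => P t x) (Ici 0))
    (hL : ∀ x, ContinuousOn (fun t => L t x) (Ici 0))
    (hres : ∀ t, 0 ≤ t → ∀ x, L t x = P t x + ∫ a in 0..t, L a (P (t - a) x))
    {t : ℝ} (ht : 0 ≤ t) (x : X) : L t x = P t x + ∫ s in 0..t, P (t - s) (L s x) := by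
  -- Extending `P` and `L` constantly to `t < 0` changes no integral over `[0, t]`.
  have hcongr : ∀ {t : ℝ} {F : ℝ → ℝ → X}, 0 ≤ t →
      ∫ s in 0..t, F (max 0 s) (max 0 (t - s)) = ∫ s in 0..t, F s (t - s) := fun ht =>
    integral_congr fun s hs => by
      rw [uIcc_of_le ht] at hs
      rw [max_eq_right hs.1, max_eq_right (sub_nonneg.2 hs.2)]
  have key := resolvent_comm_of_continuous (P := fun t => P (max 0 t)) (L := fun t => L (max 0 t))
    (continuous_apply_max_zero hP) (continuous_apply_max_zero hL)
    (fun t ht x => by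
      simpa only [max_eq_right ht, hcongr (F := fun a b => L a (P b x)) ht] using hres t ht x)
    ht x
  simpa only [max_eq_right ht, hcongr (F := fun a b => P b (L a x)) ht] using key

end Resolvent

theorem comp_apply_integral_of_nilpotent {X : Type*} [NormedAddCommGroup X] [NormedSpace ℝ X]
    [CompleteSpace X]
    {T0 : ℝ → X →L[ℝ] X} (hsg : ∀ t u : ℝ, 0 ≤ t → 0 ≤ u → T0 (t + u) = (T0 t).comp (T0 u))
    (hnil : ∀ t : ℝ, 1 ≤ t → T0 t = 0) (C : X →L[ℝ] X) {φ : ℝ → X}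
    (hφ : IntervalIntegrable (fun a => T0 a (φ (-a))) volume 0 1) {t : ℝ} (ht₀ : 0 ≤ t)
    (ht₁ : t ≤ 1) :
    C (T0 t (∫ a in 0..1, T0 a (φ (-a)))) = ∫ a in t..1, C (T0 a (φ (t - a))) := by
  set g : ℝ → X := fun a => C (T0 a (φ (t - a)))
  have hg : g = {a | a ≤ 1}.indicator g := by
    ext a
    by_cases ha : a ≤ 1
    · simp [ha]
    · simp [ha, g, hnil a (not_le.1 ha).le]
  calc C (T0 t (∫ a in 0..1, T0 a (φ (-a)))) = ∫ a in 0..1, C (T0 t (T0 a (φ (-a)))) :=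
        ((C.comp (T0 t)).intervalIntegral_comp_comm hφ).symm
    _ = ∫ a in 0..1, g (t + a) := integral_congr fun a ha => by
        rw [uIcc_of_le zero_le_one] at ha
        simp [g, hsg t a ht₀ ha.1]
    _ = ∫ a in t..t + 1, g a := by simp [integral_comp_add_left]
    _ = ∫ a in t..1, g a := by
        rw [← integral_indicator (a₃ := t + 1) ⟨ht₁, by linarith⟩, ← hg]

theorem stmt_10_general (X : Type*) [NormedAddCommGroup X] [NormedSpace ℝ X] [CompleteSpace X]
    (T0 : ℝ → X →L[ℝ] X)
    (hT0sg : ∀ t u : ℝ, 0 ≤ t → 0 ≤ u → T0 (t + u) = (T0 t).comp (T0 u))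
    (hT0cont : ∀ x : X, ContinuousOn (fun t => T0 t x) (Ici 0))
    (hnil : ∀ t : ℝ, 1 ≤ t → T0 t = 0)
    (C : X →L[ℝ] X)
    (L : ℝ → X →L[ℝ] X)
    (hLcont : ∀ x : X, ContinuousOn (fun t => L t x) (Ici 0))
    (hL : ∀ t : ℝ, 0 ≤ t → ∀ x : X,
      L t x = C (T0 t x) + ∫ a in (0:ℝ)..t, L a (C (T0 (t - a) x)))
    (T : ℝ → X →L[ℝ] X)
    (hT : ∀ t : ℝ, 0 ≤ t → ∀ x : X,
      T t x = T0 t x + ∫ s in (0:ℝ)..t, T0 (t - s) (L s x))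
    (φ : ℝ → X) (hφ : IntegrableOn φ (Icc (-1:ℝ) 0))
    (f : ℝ → X)
    (hf : ∀ t : ℝ, 0 ≤ t → f t = ∫ a in t..(1:ℝ), C (T0 a (φ (t - a))))
    (hf1 : ∀ t : ℝ, 1 ≤ t → f t = 0)
    (b : ℝ → X)
    (hb : ∀ t : ℝ, 0 ≤ t → b t = f t + ∫ a in (0:ℝ)..t, L a (f (t - a)))
    (Kφ : X) (hKφ : Kφ = ∫ a in (0:ℝ)..1, T0 a (φ (-a))) :
    (∀ t : ℝ, 0 ≤ t → f t = C (T0 t Kφ)) ∧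
    (∀ t : ℝ, 0 < t → b t = L t Kφ ∧ b t = C (T t Kφ)) := by
  have hφT := intervalIntegrable_apply_neg hT0cont zero_le_one hφ
  have hf_eq : ∀ t, 0 ≤ t → f t = C (T0 t Kφ) := by
    intro t ht
    rcases le_or_gt 1 t with h1 | h1
    · simp [hf1 t h1, hnil t h1]
    · rw [hf t ht, hKφ, comp_apply_integral_of_nilpotent hT0sg hnil C hφT ht h1.le]
  have hbL : ∀ t, 0 ≤ t → b t = L t Kφ := fun t ht => by
    rw [hb t ht, hf_eq t ht, hL t ht Kφ]
    congr 1
    refine integral_congr fun a ha => ?_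
    rw [uIcc_of_le ht] at ha
    rw [hf_eq (t - a) (sub_nonneg.2 ha.2)]
  refine ⟨hf_eq, fun t ht => ⟨hbL t ht.le, ?_⟩⟩
  have hint := intervalIntegrable_apply_sub hT0cont (hLcont Kφ) ht.le
  rw [hbL t ht.le, hT t ht.le, map_add, ← C.intervalIntegral_comp_comm hint]
  exact resolvent_comm (P := fun t => C.comp (T0 t))
    (fun x => C.continuous.comp_continuousOn (hT0cont x)) hLcont hL ht.le Kφ

theorem stmt_10 (X : Type*) [NormedAddCommGroup X] [NormedSpace ℝ X] [CompleteSpace X]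
    (T0 : ℝ → X →L[ℝ] X)
    (hT0id : T0 0 = ContinuousLinearMap.id ℝ X)
    (hT0sg : ∀ t u : ℝ, 0 ≤ t → 0 ≤ u → T0 (t + u) = (T0 t).comp (T0 u))
    (hT0cont : ∀ x : X, ContinuousOn (fun t => T0 t x) (Ici 0))
    (hnil : ∀ t : ℝ, 1 ≤ t → T0 t = 0)
    (C : X →L[ℝ] X)
    (L : ℝ → X →L[ℝ] X)
    (hLcont : ∀ x : X, ContinuousOn (fun t => L t x) (Ici 0))
    (hL : ∀ t : ℝ, 0 ≤ t → ∀ x : X,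
      L t x = C (T0 t x) + ∫ a in (0:ℝ)..t, L a (C (T0 (t - a) x)))
    (T : ℝ → X →L[ℝ] X)
    (hT : ∀ t : ℝ, 0 ≤ t → ∀ x : X,
      T t x = T0 t x + ∫ s in (0:ℝ)..t, T0 (t - s) (L s x))
    (φ : ℝ → X) (hφ : IntegrableOn φ (Icc (-1:ℝ) 0))
    (f : ℝ → X)
    (hf : ∀ t : ℝ, 0 ≤ t → f t = ∫ a in t..(1:ℝ), C (T0 a (φ (t - a))))
    (hf1 : ∀ t : ℝ, 1 ≤ t → f t = 0)
    (b : ℝ → X)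
    (hb : ∀ t : ℝ, 0 ≤ t → b t = f t + ∫ a in (0:ℝ)..t, L a (f (t - a)))
    (Kφ : X) (hKφ : Kφ = ∫ a in (0:ℝ)..1, T0 a (φ (-a))) :
    (∀ t : ℝ, 0 ≤ t → f t = C (T0 t Kφ)) ∧
    (∀ t : ℝ, 0 < t → b t = L t Kφ ∧ b t = C (T t Kφ)) :=
  stmt_10_general X T0 hT0sg hT0cont hnil C L hLcont hL T hT φ hφ f hf hf1 b hb Kφ hKφ
end
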